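/- arXiv:1310.7053 — 10 statements merged into one kernel-verified Lean document; each statement's English description precedes it below -/
import Mathlib

section
/- A function f : ℕ^r → ℂ is firmly multiplicative (i.e., f is not identically zero and f(m₁n₁,...,mᵣnᵣ) = f(m₁,...,mᵣ)·f(n₁,...,nᵣ) whenever gcd(mᵢ,nᵢ)=1 for each i) if and only if there exist multiplicative functions f₁,...,fᵣ : ℕ → ℂ (each of one variable) such that f(n₁,...,nᵣ) = f₁(n₁)···fᵣ(nᵣ) for all positive integers n₁,...,nᵣ; in that case fᵢ(n) = f(1,...,1,n,1,...,1) with n in the i-th position. -/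
open Finset

/-- A one-variable function is multiplicative: not identically zero (on positive
integers) and `g (m*n) = g m * g n` whenever `gcd m n = 1`. -/
def IsMultiplicative1 (g : ℕ → ℂ) : Prop :=
  (∃ n : ℕ, 0 < n ∧ g n ≠ 0) ∧
    ∀ m n : ℕ, 0 < m → 0 < n → Nat.Coprime m n → g (m * n) = g m * g n

/-- `f : ℕ^r → ℂ` is firmly multiplicative. -/
def IsFirmlyMultiplicative {r : ℕ} (f : (Fin r → ℕ) → ℂ) : Prop :=
  (∃ n : Fin r → ℕ, (∀ i, 0 < n i) ∧ f n ≠ 0) ∧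
    ∀ m n : Fin r → ℕ, (∀ i, 0 < m i) → (∀ i, 0 < n i) →
      (∀ i, Nat.Coprime (m i) (n i)) →
      f (fun i => m i * n i) = f m * f n

/-! Every `n` with positive entries is the entrywise product of the vectors
`Pi.mulSingle i (n i)` (entry `n i` at `i`, `1` elsewhere), any two of which are entrywise
coprime; firm multiplicativity splits `f n` along this product, and `f 1 = 1` since `f` is not
identically zero. Conversely, a product of multiplicative functions of the separate entries is
firmly multiplicative factor by factor. -/

namespace IsFirmlyMultiplicative

variable {r : ℕ} {f : (Fin r → ℕ) → ℂ}

theorem map_mul_of_one_or_one (hf : IsFirmlyMultiplicative f) {m n : Fin r → ℕ}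
    (hm : ∀ i, 0 < m i) (hn : ∀ i, 0 < n i) (h : ∀ i, m i = 1 ∨ n i = 1) :
    f (m * n) = f m * f n :=
  hf.2 m n hm hn fun i => (h i).elim (fun h => h ▸ Nat.coprime_one_left _)
    (fun h => h ▸ Nat.coprime_one_right _)

theorem map_one (hf : IsFirmlyMultiplicative f) : f 1 = 1 := by
  obtain ⟨n, hn, hfn⟩ := hf.1
  have h := hf.map_mul_of_one_or_one (n := 1) hn (fun _ => one_pos) (fun _ => .inr rfl)
  rw [mul_one] at h
  exact mul_left_cancel₀ hfn (h.symm.trans (mul_one _).symm)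

theorem map_prod_mulSingle (hf : IsFirmlyMultiplicative f) {n : Fin r → ℕ}
    (hn : ∀ i, 0 < n i) (s : Finset (Fin r)) :
    f (∏ i ∈ s, Pi.mulSingle i (n i)) = ∏ i ∈ s, f (Pi.mulSingle i (n i)) := by
  induction s using Finset.induction_on with
  | empty => simpa using hf.map_one
  | insert a s has ih =>
    rw [prod_insert has, prod_insert has, ← ih]
    refine hf.map_mul_of_one_or_one (fun j => ?_) (fun j => ?_) (fun j => ?_)
    · rw [Pi.mulSingle_apply]; split_ifs <;> simp [hn]
    · rw [Finset.prod_apply, prod_pi_mulSingle]; split_ifs <;> simp [hn]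
    · rw [Finset.prod_apply, prod_pi_mulSingle, Pi.mulSingle_apply]
      rcases eq_or_ne j a with rfl | hja
      · simp [has]
      · simp [hja]

theorem eq_prod_mulSingle (hf : IsFirmlyMultiplicative f) {n : Fin r → ℕ}
    (hn : ∀ i, 0 < n i) : f n = ∏ i, f (Pi.mulSingle i (n i)) := by
  rw [← hf.map_prod_mulSingle hn, univ_prod_mulSingle]

theorem isMultiplicative1_mulSingle (hf : IsFirmlyMultiplicative f) (i : Fin r) :
    IsMultiplicative1 fun n => f (Pi.mulSingle i n) := by
  refine ⟨⟨1, one_pos, by simp [hf.map_one]⟩, fun m n hm hn hmn => ?_⟩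
  show f (Pi.mulSingle i (m * n)) = f (Pi.mulSingle i m) * f (Pi.mulSingle i n)
  rw [Pi.mulSingle_mul]
  refine hf.2 _ _ (fun j => ?_) (fun j => ?_) (fun j => ?_) <;>
    simp only [Pi.mulSingle_apply] <;> split_ifs
  exacts [hm, one_pos, hn, one_pos, hmn, Nat.coprime_one_left 1]

end IsFirmlyMultiplicative

theorem isFirmlyMultiplicative_of_eq_prod {r : ℕ} {f : (Fin r → ℕ) → ℂ} {g : Fin r → ℕ → ℂ}
    (hg : ∀ i, IsMultiplicative1 (g i))
    (hfg : ∀ n : Fin r → ℕ, (∀ i, 0 < n i) → f n = ∏ i, g i (n i)) :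
    IsFirmlyMultiplicative f := by
  refine ⟨?_, fun m n hm hn hmn => ?_⟩
  · choose n hn hgn using fun i => (hg i).1
    exact ⟨n, hn, hfg n hn ▸ prod_ne_zero_iff.mpr fun i _ => hgn i⟩
  · rw [hfg _ fun i => Nat.mul_pos (hm i) (hn i), hfg m hm, hfg n hn, ← prod_mul_distrib]
    exact prod_congr rfl fun i _ => (hg i).2 _ _ (hm i) (hn i) (hmn i)

theorem firmly_multiplicative_iff_prod_of_multiplicative {r : ℕ}
    (f : (Fin r → ℕ) → ℂ) :
    IsFirmlyMultiplicative f ↔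
      ∃ g : Fin r → ℕ → ℂ, (∀ i, IsMultiplicative1 (g i)) ∧
        (∀ n : Fin r → ℕ, (∀ i, 0 < n i) → f n = ∏ i, g i (n i)) ∧
        (∀ i : Fin r, ∀ n : ℕ, 0 < n →
          g i n = f (fun j => if j = i then n else 1)) := by
  refine ⟨fun hf => ?_, fun ⟨g, hg, hfg, _⟩ => isFirmlyMultiplicative_of_eq_prod hg hfg⟩
  exact ⟨fun i n => f (Pi.mulSingle i n), hf.isMultiplicative1_mulSingle,
    fun n hn => hf.eq_prod_mulSingle hn,
    fun i n _ => congrArg f (funext fun j => Pi.mulSingle_apply i n j)⟩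
end

section
/- For every r ≥ 2 and all positive integers n₁,...,nᵣ: ∑_{d₁∣n₁,...,dᵣ∣nᵣ} ϱ(d₁,...,dᵣ) = τ(n₁···nᵣ), where ϱ(d₁,...,dᵣ) = 1 if d₁,...,dᵣ are pairwise relatively prime and 0 otherwise, and τ is the number-of-divisors function. -/
/-!
Count more generally the tuples of pairwise coprime divisors `dᵢ ∣ nᵢ` that are also coprime to a
fixed `m`: there are as many of them as divisors of `∏ nᵢ` coprime to `m`. Choosing the first entry
`e ∣ n₀` replaces `m` by `m * e` for the remaining entries, so by induction on `r` everything
reduces to the two-factor identity `coprimeDivisorCount_mul_eq_sum`. That identity passes to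
coprime products in `x`, and for `x = p ^ k`, `y = p ^ a * y₀` with `p ∤ y₀` and `p ∤ m`, both of
its sides are `a + k + 1` times the number of divisors of `y₀` coprime to `m`.
-/

open Finset Function

theorem Nat.Coprime.sum_divisors_mul_eq_sum_sum {M : Type*} [AddCommMonoid M] {x y : ℕ}
    (h : x.Coprime y) (f : ℕ → M) :
    ∑ d ∈ (x * y).divisors, f d = ∑ a ∈ x.divisors, ∑ b ∈ y.divisors, f (a * b) := by
  rw [h.divisors_mul, sum_map, ← sum_product']
  exact sum_attach (divisors x ×ˢ divisors y) fun p => f (p.1 * p.2)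

def coprimeDivisorCount (m N : ℕ) : ℕ := #{c ∈ N.divisors | c.Coprime m}

lemma coprimeDivisorCount_zero_right (m : ℕ) : coprimeDivisorCount m 0 = 0 := by
  simp [coprimeDivisorCount]

lemma coprimeDivisorCount_one_left (N : ℕ) : coprimeDivisorCount 1 N = #N.divisors := by
  simp [coprimeDivisorCount]

lemma coprimeDivisorCount_mul_of_coprime_right {k N : ℕ} (h : k.Coprime N) (m : ℕ) :
    coprimeDivisorCount (m * k) N = coprimeDivisorCount m N := by
  unfold coprimeDivisorCount
  refine congrArg card (filter_congr fun c hc => ?_)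
  rw [Nat.coprime_mul_iff_right, and_iff_left]
  exact (h.coprime_dvd_right (Nat.dvd_of_mem_divisors hc)).symm

lemma coprimeDivisorCount_mul_pow_succ (m k j N : ℕ) :
    coprimeDivisorCount (m * k ^ (j + 1)) N = coprimeDivisorCount (m * k) N := by
  simp only [coprimeDivisorCount, Nat.coprime_mul_iff_right, Nat.coprime_pow_right_iff j.succ_pos]

lemma coprimeDivisorCount_mul {x y : ℕ} (h : x.Coprime y) (m : ℕ) :
    coprimeDivisorCount m (x * y) = coprimeDivisorCount m x * coprimeDivisorCount m y := by
  simp only [coprimeDivisorCount, card_filter, h.sum_divisors_mul_eq_sum_sum, sum_mul_sum,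
    Nat.coprime_mul_iff_left, ite_zero_mul_ite_zero, mul_one]

lemma coprimeDivisorCount_prime_pow {p : ℕ} (hp : p.Prime) (m k : ℕ) :
    coprimeDivisorCount m (p ^ k) = if p.Coprime m then k + 1 else 1 := by
  rw [coprimeDivisorCount, card_filter, Nat.sum_divisors_prime_pow hp, sum_range_succ']
  simp only [Nat.coprime_pow_left_iff (Nat.succ_pos _), pow_zero, Nat.coprime_one_left_eq_true]
  split_ifs <;> simp

lemma coprimeDivisorCount_prime_pow_mul {p : ℕ} (hp : p.Prime) (m k z : ℕ) :
    coprimeDivisorCount m (p ^ k * z) =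
      coprimeDivisorCount m z + if p.Coprime m then k * coprimeDivisorCount (m * p) z else 0 := by
  rcases eq_or_ne z 0 with rfl | hz
  · simp [coprimeDivisorCount_zero_right]
  obtain ⟨a, z₀, hpz₀, rfl⟩ := Nat.exists_eq_pow_mul_and_not_dvd hz p hp.ne_one
  have hp₀ : p.Coprime z₀ := hp.coprime_iff_not_dvd.2 hpz₀
  have hp_mul : ¬ p.Coprime (m * p) := by
    simp [Nat.coprime_mul_iff_right, hp.ne_one]
  rw [← mul_assoc, ← pow_add]
  simp only [coprimeDivisorCount_mul (hp₀.pow_left _), coprimeDivisorCount_prime_pow hp,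
    if_neg hp_mul, coprimeDivisorCount_mul_of_coprime_right hp₀]
  split_ifs <;> ring

lemma coprimeDivisorCount_prime_pow_mul_eq_sum {p : ℕ} (hp : p.Prime) (m k y : ℕ) :
    coprimeDivisorCount m (p ^ k * y) =
      ∑ e ∈ (p ^ k).divisors, if e.Coprime m then coprimeDivisorCount (m * e) y else 0 := by
  rw [Nat.sum_divisors_prime_pow hp, sum_range_succ', coprimeDivisorCount_prime_pow_mul hp]
  simp only [Nat.coprime_pow_left_iff (Nat.succ_pos _), coprimeDivisorCount_mul_pow_succ, pow_zero,
    Nat.coprime_one_left_eq_true, if_true, mul_one]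
  split_ifs <;> simp [add_comm]

theorem coprimeDivisorCount_mul_eq_sum (x y m : ℕ) :
    coprimeDivisorCount m (x * y) =
      ∑ a ∈ x.divisors, if a.Coprime m then coprimeDivisorCount (m * a) y else 0 := by
  induction x using Nat.recOnPrimeCoprime generalizing m y with
  | zero => simp [coprimeDivisorCount_zero_right]
  | prime_pow p k hp => exact coprimeDivisorCount_prime_pow_mul_eq_sum hp m k y
  | coprime a b _ _ hab iha ihb =>
    rw [hab.sum_divisors_mul_eq_sum_sum, mul_assoc, iha]
    refine sum_congr rfl fun a₁ ha₁ => ?_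
    by_cases h₁ : a₁.Coprime m
    · rw [if_pos h₁, ihb]
      refine sum_congr rfl fun a₂ ha₂ => ?_
      have h₂₁ : a₂.Coprime a₁ := ((hab.coprime_dvd_left (Nat.dvd_of_mem_divisors ha₁))
        |>.coprime_dvd_right (Nat.dvd_of_mem_divisors ha₂)).symm
      have hcond : a₂.Coprime (m * a₁) ↔ (a₁ * a₂).Coprime m := by
        rw [Nat.coprime_mul_iff_left, Nat.coprime_mul_iff_right, and_iff_right h₁,
          and_iff_left h₂₁]
      rw [if_congr hcond rfl rfl, mul_assoc]
    · rw [if_neg h₁]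
      exact (sum_eq_zero fun a₂ _ => if_neg fun h => h₁ (Nat.coprime_mul_iff_left.1 h).1).symm

lemma Fin.sum_piFinset_succ {α M : Type*} [AddCommMonoid M] {r : ℕ} (s : Fin (r + 1) → Finset α)
    (f : (Fin (r + 1) → α) → M) :
    ∑ d ∈ Fintype.piFinset s, f d =
      ∑ a ∈ s 0, ∑ t ∈ Fintype.piFinset (Fin.tail s), f (Fin.cons a t) := by
  have h := map_consEquiv_filter_piFinset s (fun _ => True)
  simp only [filter_true] at h
  rw [← sum_product', ← h, sum_map]
  simp [Fin.consEquiv]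

lemma pairwise_coprime_cons_and_coprime_iff {r : ℕ} (e m : ℕ) (t : Fin r → ℕ) :
    (Pairwise (Nat.Coprime on (Fin.cons e t : Fin (r + 1) → ℕ)) ∧
        ∀ i, (Fin.cons e t : Fin (r + 1) → ℕ) i |>.Coprime m) ↔
      e.Coprime m ∧ Pairwise (Nat.Coprime on t) ∧ ∀ i, (t i).Coprime (m * e) := by
  simp only [pairwise_fin_succ_iff_of_isSymm, Fin.forall_fin_succ, onFun, Fin.cons_zero,
    Fin.cons_succ, Nat.coprime_mul_iff_right]
  exact ⟨fun ⟨⟨h₀, ht⟩, he, hm⟩ => ⟨he, ht, fun i => ⟨hm i, (h₀ i).symm⟩⟩,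
    fun ⟨he, ht, h⟩ => ⟨⟨fun j => (h j).2.symm, ht⟩, he, fun i => (h i).1⟩⟩

open Classical in
theorem card_pairwise_coprime_divisor_tuples_coprime (m : ℕ) {r : ℕ} (n : Fin r → ℕ) :
    #{d ∈ Fintype.piFinset (fun i => (n i).divisors) |
        Pairwise (Nat.Coprime on d) ∧ ∀ i, (d i).Coprime m} =
      coprimeDivisorCount m (∏ i, n i) := by
  induction r generalizing m with
  | zero => simp [coprimeDivisorCount, filter_singleton, Nat.coprime_one_left_eq_true]
  | succ r ih =>
    rw [card_filter, Fin.sum_piFinset_succ, Fin.prod_univ_succ, coprimeDivisorCount_mul_eq_sum]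
    refine sum_congr rfl fun e _ => ?_
    simp only [pairwise_coprime_cons_and_coprime_iff]
    by_cases he : e.Coprime m
    · rw [if_pos he, ← ih, card_filter]
      exact sum_congr rfl fun t _ => if_congr (and_iff_right he) rfl rfl
    · rw [if_neg he]
      exact sum_eq_zero fun t _ => if_neg (he ∘ And.left)

theorem sum_pairwise_coprime_characteristic_eq_tau_general {r : ℕ}
    (n : Fin r → ℕ) :
    ∑ d ∈ Fintype.piFinset (fun i => (n i).divisors),
        (if ∀ i j : Fin r, i ≠ j → Nat.Coprime (d i) (d j) then 1 else 0)
      = (∏ i, n i).divisors.card := by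
  rw [← coprimeDivisorCount_one_left, ← card_pairwise_coprime_divisor_tuples_coprime, card_filter]
  simp [Pairwise, onFun]

theorem sum_pairwise_coprime_characteristic_eq_tau {r : ℕ} (hr : 2 ≤ r)
    (n : Fin r → ℕ) (hn : ∀ i, 0 < n i) :
    ∑ d ∈ Fintype.piFinset (fun i => (n i).divisors),
        (if ∀ i j : Fin r, i ≠ j → Nat.Coprime (d i) (d j) then 1 else 0)
      = (∏ i, n i).divisors.card :=
  sum_pairwise_coprime_characteristic_eq_tau_general n
end

section
/- For all positive integers n₁,...,nᵣ: ∑_{d₁∣n₁,...,dᵣ∣nᵣ} gcd(d₁,...,dᵣ) = ∑_{d ∣ gcd(n₁,...,nᵣ)} φ(d)·τ(n₁/d)···τ(nᵣ/d), where φ is Euler's totient function and τ is the number-of-divisors function. -/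
/-!
Expand `gcd d = ∑_{e ∣ gcd d} φ(e)` and swap the two sums. For a fixed `e ∣ gcd n`, the tuples
`d` with `dᵢ ∣ nᵢ` and `e ∣ dᵢ` for every `i` are the tuples `dᵢ = e * dᵢ'` with `dᵢ' ∣ nᵢ / e`,
so there are `∏ τ(nᵢ / e)` of them.
-/

open Finset

theorem Nat.card_divisors_filter_dvd {e m : ℕ} (he : e ∣ m) :
    #{d ∈ m.divisors | e ∣ d} = #(m / e).divisors := by
  obtain ⟨k, rfl⟩ := he
  rcases eq_or_ne e 0 with rfl | he
  · simp
  rw [Nat.mul_div_cancel_left k (Nat.pos_of_ne_zero he),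
    ← Finset.card_image_of_injective k.divisors (mul_right_injective₀ he)]
  congr 1
  ext d
  simp only [mem_filter, Nat.mem_divisors, mem_image, mul_ne_zero_iff, ne_eq]
  constructor
  · rintro ⟨⟨hd, -, hk⟩, a, rfl⟩
    exact ⟨a, ⟨(Nat.mul_dvd_mul_iff_left (Nat.pos_of_ne_zero he)).mp hd, hk⟩, rfl⟩
  · rintro ⟨a, ⟨ha, hk⟩, rfl⟩
    exact ⟨⟨Nat.mul_dvd_mul_left e ha, he, hk⟩, dvd_mul_right e a⟩

theorem Finset.divisors_gcd_eq_filter {ι : Type*} {s : Finset ι} {f g : ι → ℕ}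
    (hfg : ∀ i ∈ s, f i ∣ g i) (hg : ∀ i ∈ s, g i ≠ 0) :
    (s.gcd f).divisors = {e ∈ (s.gcd g).divisors | ∀ i ∈ s, e ∣ f i} := by
  have hf : ∀ i ∈ s, f i ≠ 0 := fun i hi => ne_zero_of_dvd_ne_zero (hg i hi) (hfg i hi)
  have hzero : s.gcd f = 0 ↔ s.gcd g = 0 := by
    simp only [gcd_eq_zero_iff]
    exact ⟨fun h i hi => absurd (h i hi) (hf i hi), fun h i hi => absurd (h i hi) (hg i hi)⟩
  ext e
  simp only [mem_filter, Nat.mem_divisors, ← dvd_gcd_iff, ne_eq, hzero]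
  exact ⟨fun ⟨he, hg⟩ => ⟨⟨he.trans (gcd_mono_fun hfg), hg⟩, he⟩,
    fun ⟨⟨_, hg⟩, he⟩ => ⟨he, hg⟩⟩

theorem Fintype.card_filter_piFinset_forall {ι : Type*} [Fintype ι] [DecidableEq ι]
    {α : ι → Type*} (s : ∀ i, Finset (α i)) (p : ∀ i, α i → Prop) [∀ i, DecidablePred (p i)]
    [DecidablePred fun x : ∀ i, α i => ∀ i, p i (x i)] :
    #(filter (fun x : ∀ i, α i => ∀ i, p i (x i)) (piFinset s)) = ∏ i, #{a ∈ s i | p i a} := by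
  rw [← card_piFinset fun i => {a ∈ s i | p i a}]
  congr 1
  ext x
  simp only [mem_filter, mem_piFinset, forall_and]

theorem sum_gcd_divisors_eq_sum_totient_tau_general {r : ℕ} (n : Fin r → ℕ) :
    ∑ d ∈ Fintype.piFinset (fun i => (n i).divisors), Finset.univ.gcd d
      = ∑ d ∈ (Finset.univ.gcd n).divisors,
          Nat.totient d * ∏ i, (n i / d).divisors.card := by
  set D := Fintype.piFinset fun i => (n i).divisors
  have gcd_eq_sum_totient (d : Fin r → ℕ) (hd : d ∈ D) :
      univ.gcd d = ∑ e ∈ (univ.gcd n).divisors with ∀ i, e ∣ d i, e.totient := by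
    simp only [D, Fintype.mem_piFinset, Nat.mem_divisors] at hd
    rw [← Nat.sum_totient (univ.gcd d),
      divisors_gcd_eq_filter (fun i _ => (hd i).1) fun i _ => (hd i).2]
    simp only [mem_univ, true_implies]
  calc ∑ d ∈ D, univ.gcd d
      = ∑ e ∈ (univ.gcd n).divisors, ∑ d ∈ D with ∀ i, e ∣ d i, e.totient := by
        rw [sum_congr rfl gcd_eq_sum_totient]
        exact sum_comm' fun d e => by simp only [mem_filter]; tauto
    _ = _ := by
        refine sum_congr rfl fun e he => ?_
        have hen (i : Fin r) : e ∣ n i :=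
          (Nat.dvd_of_mem_divisors he).trans (gcd_dvd (mem_univ i))
        rw [sum_const, smul_eq_mul, mul_comm,
          Fintype.card_filter_piFinset_forall (fun i => (n i).divisors) fun _ d => e ∣ d]
        simp only [Nat.card_divisors_filter_dvd (hen _)]

theorem sum_gcd_divisors_eq_sum_totient_tau {r : ℕ} (n : Fin r → ℕ)
    (hn : ∀ i, 0 < n i) :
    ∑ d ∈ Fintype.piFinset (fun i => (n i).divisors), Finset.univ.gcd d
      = ∑ d ∈ (Finset.univ.gcd n).divisors,
          Nat.totient d * ∏ i, (n i / d).divisors.card :=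
  sum_gcd_divisors_eq_sum_totient_tau_general n
end

section
/- If 2^r − 1 = p is a Mersenne prime, then the r-tuple (p, p, ..., p) is a perfect r-tuple, i.e., σ(p,...,p) = 2·gcd(p,...,p) = 2p, where σ(n₁,...,nᵣ) = ∑_{d₁∣n₁,...,dᵣ∣nᵣ} gcd(d₁,...,dᵣ). -/
/-!
The divisors of a prime `p` are `1` and `p`, so a tuple of divisors of `p` has gcd `p` when it is
the constant tuple `(p, …, p)` and gcd `1` otherwise. Among the `2 ^ r` such `r`-tuples this gives
`σ(p, …, p) = (2 ^ r - 1) + p`, which is `2 p` exactly when `p = 2 ^ r - 1`.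
-/

open Finset

theorem Finset.gcd_const {α β : Type*} [CommMonoidWithZero α] [NormalizedGCDMonoid α]
    [DecidableEq α] {s : Finset β} (hs : s.Nonempty) (a : α) :
    s.gcd (fun _ => a) = normalize a := by
  rw [gcd_eq_gcd_image, image_const hs, gcd_singleton, id]

section PrimeTuples

variable {ι : Type*} [Fintype ι] [DecidableEq ι] {p : ℕ}

theorem Nat.Prime.univ_gcd_eq_one_of_mem_piFinset_divisors (hp : p.Prime) {d : ι → ℕ}
    (hd : d ∈ Fintype.piFinset fun _ => p.divisors) (hne : d ≠ fun _ => p) :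
    univ.gcd d = 1 := by
  obtain ⟨i, hi⟩ := Function.ne_iff.mp hne
  have hdi : d i = 1 := by
    have := Fintype.mem_piFinset.mp hd i
    rw [hp.divisors, mem_insert, mem_singleton] at this
    exact this.resolve_right hi
  exact Nat.dvd_one.mp (hdi ▸ Finset.gcd_dvd (mem_univ i))

theorem Nat.Prime.sum_univ_gcd_piFinset_divisors [Nonempty ι] (hp : p.Prime) :
    ∑ d ∈ Fintype.piFinset (fun _ : ι => p.divisors), univ.gcd d
      = 2 ^ Fintype.card ι - 1 + p := by
  have hconst : (fun _ : ι => p) ∈ Fintype.piFinset fun _ => p.divisors :=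
    Fintype.mem_piFinset.mpr fun _ => Nat.mem_divisors_self p hp.ne_zero
  have hcard : #(Fintype.piFinset fun _ : ι => p.divisors) = 2 ^ Fintype.card ι := by
    rw [Fintype.card_piFinset, prod_const, Finset.card_univ, hp.divisors, card_pair hp.one_lt.ne]
  rw [← add_sum_erase _ _ hconst, Finset.gcd_const univ_nonempty, normalize_eq,
    sum_congr rfl fun d hd => hp.univ_gcd_eq_one_of_mem_piFinset_divisors
      (mem_of_mem_erase hd) (ne_of_mem_erase hd),
    sum_const, card_erase_of_mem hconst, hcard, smul_eq_mul, mul_one, add_comm]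

end PrimeTuples

theorem mersenne_gives_perfect_tuple {r : ℕ} (hp : Nat.Prime (2 ^ r - 1)) :
    (∑ d ∈ Fintype.piFinset (fun _ : Fin r => (2 ^ r - 1).divisors),
        Finset.univ.gcd d)
      = 2 * Finset.univ.gcd (fun _ : Fin r => 2 ^ r - 1) ∧
    2 * Finset.univ.gcd (fun _ : Fin r => 2 ^ r - 1) = 2 * (2 ^ r - 1) := by
  have : NeZero r := ⟨by rintro rfl; exact Nat.not_prime_zero hp⟩
  have hgcd : univ.gcd (fun _ : Fin r => 2 ^ r - 1) = 2 ^ r - 1 := by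
    rw [Finset.gcd_const univ_nonempty, normalize_eq]
  rw [hgcd, hp.sum_univ_gcd_piFinset_divisors, Fintype.card_fin]
  exact ⟨two_mul _ |>.symm, rfl⟩
end

section
/- For arithmetic functions f, g : ℕ^r → ℂ, the lcm convolution (f⊕g)(n₁,...,nᵣ) = ∑_{lcm(d₁,e₁)=n₁,...,lcm(dᵣ,eᵣ)=nᵣ} f(d₁,...,dᵣ)g(e₁,...,eᵣ) satisfies f⊕g = ((f*𝟏)·(g*𝟏)) * μ_r, where * is the r-variable Dirichlet convolution, 𝟏 is the constant 1 function, · is pointwise product, and μ_r(n₁,...,nᵣ) = μ(n₁)···μ(nᵣ). -/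
open Finset

/-- The `r`-variable Dirichlet convolution. -/
noncomputable def dirichletConvR {r : ℕ} (f g : (Fin r → ℕ) → ℂ) (n : Fin r → ℕ) : ℂ :=
  ∑ d ∈ Fintype.piFinset (fun i => (n i).divisors),
    f d * g (fun i => n i / d i)

/-- The `r`-variable lcm convolution. -/
noncomputable def lcmConvR {r : ℕ} (f g : (Fin r → ℕ) → ℂ) (n : Fin r → ℕ) : ℂ :=
  ∑ p ∈ ((Fintype.piFinset fun i => (n i).divisors) ×ˢ
          (Fintype.piFinset fun i => (n i).divisors)).filter
        (fun p => ∀ i, Nat.lcm (p.1 i) (p.2 i) = n i),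
    f p.1 * g p.2

/-- `μ_r(n₁,...,nᵣ) = μ(n₁)···μ(nᵣ)`. -/
noncomputable def muR {r : ℕ} (n : Fin r → ℕ) : ℂ :=
  ∏ i, ((ArithmeticFunction.moebius (n i) : ℤ) : ℂ)

/-!
Expanding `(f * 𝟏)(d) · (g * 𝟏)(d)` as a sum of `f a · g b` over pairs with `aᵢ ∣ dᵢ` and
`bᵢ ∣ dᵢ`, i.e. `lcm(aᵢ, bᵢ) ∣ dᵢ`, and exchanging the order of summation, the coefficient of
`f a · g b` on the right becomes `∑_{lᵢ ∣ dᵢ ∣ nᵢ} μ_r(n / d)` with `lᵢ = lcm(aᵢ, bᵢ)`. This sum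
factors over the coordinates, and in each coordinate `d ↦ n / d` turns it into
`∑_{e ∣ n / l} μ(e) = [l = n]`.
-/

open ArithmeticFunction Fintype
open scoped ArithmeticFunction.Moebius

theorem sum_divisors_moebius (n : ℕ) : ∑ d ∈ n.divisors, μ d = if n = 1 then 1 else 0 := by
  rw [← coe_mul_zeta_apply, moebius_mul_coe_zeta, one_apply]

theorem sum_divisors_filter_dvd_moebius_div {l n : ℕ} (hn : n ≠ 0) (hl : l ∣ n) :
    ∑ d ∈ n.divisors with l ∣ d, μ (n / d) = if l = n then 1 else 0 := by
  have hl0 : l ≠ 0 := ne_zero_of_dvd_ne_zero hn hl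
  calc ∑ d ∈ n.divisors with l ∣ d, μ (n / d)
      = ∑ e ∈ n.divisors, if l ∣ n / e then μ e else 0 := by
        rw [sum_filter, ← Nat.sum_div_divisors n]
        refine sum_congr rfl fun d hd => ?_
        rw [Nat.div_div_self (Nat.dvd_of_mem_divisors hd) hn]
    _ = ∑ e ∈ n.divisors with e ∣ n / l, μ e := by
        rw [sum_filter]
        refine sum_congr rfl fun e he => ?_
        congr 1
        rw [eq_iff_iff, Nat.dvd_div_iff_mul_dvd (Nat.dvd_of_mem_divisors he),
          Nat.dvd_div_iff_mul_dvd hl, mul_comm]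
    _ = if l = n then 1 else 0 := by
        rw [Nat.divisors_filter_dvd_of_dvd hn (Nat.div_dvd_of_dvd hl), sum_divisors_moebius]
        congr 1
        rw [eq_iff_iff, Nat.div_eq_iff_eq_mul_left (Nat.pos_of_ne_zero hl0) hl, one_mul, eq_comm]

section

variable {ι : Type*} [Fintype ι] [DecidableEq ι]

theorem filter_piFinset_divisors_forall_dvd (n l : ι → ℕ)
    [DecidablePred fun d : ι → ℕ => ∀ i : ι, l i ∣ d i] :
    (piFinset fun i => (n i).divisors).filter (fun d : ι → ℕ => ∀ i : ι, l i ∣ d i)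
      = piFinset fun i => {d ∈ (n i).divisors | l i ∣ d} := by
  ext d
  simp only [mem_filter, mem_piFinset]
  exact forall_and.symm

theorem piFinset_divisors_product_eq_filter_lcm_dvd {n d : ι → ℕ}
    (hd : d ∈ piFinset fun i => (n i).divisors)
    [DecidablePred fun p : (ι → ℕ) × (ι → ℕ) => ∀ i : ι, Nat.lcm (p.1 i) (p.2 i) ∣ d i] :
    (piFinset fun i => (d i).divisors) ×ˢ (piFinset fun i => (d i).divisors)
      = ((piFinset fun i => (n i).divisors) ×ˢ (piFinset fun i => (n i).divisors)).filter
          (fun p : (ι → ℕ) × (ι → ℕ) => ∀ i : ι, Nat.lcm (p.1 i) (p.2 i) ∣ d i) := by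
  simp only [mem_piFinset, Nat.mem_divisors] at hd
  have hd0 (i : ι) : d i ≠ 0 := ne_zero_of_dvd_ne_zero (hd i).2 (hd i).1
  ext ⟨a, b⟩
  simp only [mem_filter, mem_product, mem_piFinset, Nat.mem_divisors, Nat.lcm_dvd_iff, hd0,
    (hd _).2, ne_eq, not_false_eq_true, and_true, forall_and]
  exact ⟨fun h => ⟨⟨fun i => (h.1 i).trans (hd i).1, fun i => (h.2 i).trans (hd i).1⟩, h⟩,
    And.right⟩

end

theorem sum_muR_div_piFinset_filter_dvd {r : ℕ} {n l : Fin r → ℕ} (hn : ∀ i, n i ≠ 0)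
    (hl : ∀ i, l i ∣ n i) :
    ∑ d ∈ piFinset (fun i => {d ∈ (n i).divisors | l i ∣ d}), muR (fun i => n i / d i)
      = if ∀ i, l i = n i then 1 else 0 := by
  unfold muR
  rw [← prod_univ_sum (fun i => {d ∈ (n i).divisors | l i ∣ d}) fun i d => ((μ (n i / d) : ℤ) : ℂ)]
  simp only [← Int.cast_sum, sum_divisors_filter_dvd_moebius_div (hn _) (hl _)]
  simp [Fintype.prod_boole]

theorem lcmConvR_eq_dirichlet_general {r : ℕ} (f g : (Fin r → ℕ) → ℂ)
    (n : Fin r → ℕ) :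
    lcmConvR f g n
      = dirichletConvR
          (fun m => dirichletConvR f (fun _ => 1) m *
                    dirichletConvR g (fun _ => 1) m)
          muR n := by
  simp only [lcmConvR, dirichletConvR, mul_one]
  rw [sum_filter]
  symm
  calc _ = ∑ d ∈ piFinset (fun i => (n i).divisors),
        ∑ p ∈ (piFinset fun i => (n i).divisors) ×ˢ (piFinset fun i => (n i).divisors),
          if ∀ i, Nat.lcm (p.1 i) (p.2 i) ∣ d i then f p.1 * g p.2 * muR (fun i => n i / d i)
          else 0 := by
        refine sum_congr rfl fun d hd => ?_
        rw [Finset.sum_mul_sum, ← sum_product', sum_mul,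
          piFinset_divisors_product_eq_filter_lcm_dvd hd, sum_filter]
    _ = _ := by
        rw [sum_comm]
        refine sum_congr rfl fun p hp => ?_
        simp only [mem_product, mem_piFinset, Nat.mem_divisors] at hp
        rw [← sum_filter, ← mul_sum,
          filter_piFinset_divisors_forall_dvd n fun i => Nat.lcm (p.1 i) (p.2 i),
          sum_muR_div_piFinset_filter_dvd (fun i => (hp.1 i).2)
            (fun i => Nat.lcm_dvd (hp.1 i).1 (hp.2 i).1), mul_boole]

theorem lcmConvR_eq_dirichlet {r : ℕ} (f g : (Fin r → ℕ) → ℂ)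
    (n : Fin r → ℕ) (hn : ∀ i, 0 < n i) :
    lcmConvR f g n
      = dirichletConvR
          (fun m => dirichletConvR f (fun _ => 1) m *
                    dirichletConvR g (fun _ => 1) m)
          muR n :=
  lcmConvR_eq_dirichlet_general f g n
end

section
/- If f : ℕ^r → ℂ is multiplicative, then its lcm convolute Ψ_lcm(f)(n) = ∑_{lcm(d₁,...,dᵣ)=n} f(d₁,...,dᵣ) is a multiplicative function of one variable; moreover Ψ_lcm(f) = F * μ, where F(n) = ∑_{d₁∣n,...,dᵣ∣n} f(d₁,...,dᵣ), * is one-variable Dirichlet convolution, and μ is the Möbius function. -/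
open Finset

/-- `f : ℕ^r → ℂ` is multiplicative in the several-variables sense. -/
def IsMultiplicativeR {r : ℕ} (f : (Fin r → ℕ) → ℂ) : Prop :=
  (∃ n : Fin r → ℕ, (∀ i, 0 < n i) ∧ f n ≠ 0) ∧
    ∀ m n : Fin r → ℕ, (∀ i, 0 < m i) → (∀ i, 0 < n i) →
      Nat.Coprime (∏ i, m i) (∏ i, n i) →
      f (fun i => m i * n i) = f m * f n

/-- The lcm convolute `Ψ_lcm(f)(n) = ∑_{lcm(d₁,…,dᵣ) = n} f(d₁,…,dᵣ)`. -/
noncomputable def psiLcm {r : ℕ} (f : (Fin r → ℕ) → ℂ) (n : ℕ) : ℂ :=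
  ∑ d ∈ (Fintype.piFinset fun _ : Fin r => n.divisors).filter
      (fun d => Finset.univ.lcm d = n), f d

/-- `F(n) = ∑_{d₁∣n,…,dᵣ∣n} f(d₁,…,dᵣ)`. -/
noncomputable def sumOverDivisorTuples {r : ℕ} (f : (Fin r → ℕ) → ℂ) (n : ℕ) : ℂ :=
  ∑ d ∈ Fintype.piFinset fun _ : Fin r => n.divisors, f d

/-!
Every tuple of divisors of `n` has its lcm among the divisors of `n`, so grouping the tuples by
their lcm gives `F = Ψ_lcm(f) * ζ`, and Möbius inversion gives `Ψ_lcm(f) = F * μ`. For coprime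
`m`, `n`, the divisor tuples of `m * n` are exactly the coordinatewise products of divisor tuples
of `m` and of `n`, uniquely, and the two factors have coprime coordinate products; hence `F` is
multiplicative, and so is `Ψ_lcm(f) = F * μ`.
-/

open ArithmeticFunction
open scoped Pointwise ArithmeticFunction.zeta ArithmeticFunction.Moebius

theorem Nat.Coprime.sum_piFinset_divisors_mul {ι M : Type*} [Fintype ι] [DecidableEq ι]
    [AddCommMonoid M] {m n : ℕ} (hmn : m.Coprime n) (g : (ι → ℕ) → M) :
    ∑ d ∈ Fintype.piFinset (fun _ : ι => (m * n).divisors), g d =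
      ∑ a ∈ Fintype.piFinset (fun _ : ι => m.divisors),
        ∑ b ∈ Fintype.piFinset (fun _ : ι => n.divisors), g (a * b) := by
  rw [Nat.divisors_mul, Fintype.piFinset_mul, Finset.mul_def, Finset.sum_image,
    Finset.sum_product]
  rintro ⟨a, b⟩ hab ⟨a', b'⟩ hab' h
  simp only [coe_product, Set.mem_prod, mem_coe, Fintype.mem_piFinset] at hab hab'
  have h_coord (i : ι) : (a i, b i) = (a' i, b' i) :=
    hmn.mul_injOn_divisors (mem_product.2 ⟨hab.1 i, hab.2 i⟩)
      (mem_product.2 ⟨hab'.1 i, hab'.2 i⟩) (congrFun h i)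
  exact Prod.ext (funext fun i => (Prod.ext_iff.1 (h_coord i)).1)
    (funext fun i => (Prod.ext_iff.1 (h_coord i)).2)

namespace IsMultiplicativeR

variable {r : ℕ} {f : (Fin r → ℕ) → ℂ}

theorem map_one (hf : IsMultiplicativeR f) : f 1 = 1 := by
  obtain ⟨⟨n, hn, hfn⟩, hmul⟩ := hf
  have h := hmul n 1 hn (fun _ => one_pos) (by simp)
  simp only [Pi.one_apply, mul_one] at h
  exact (mul_eq_left₀ hfn).1 h.symm

end IsMultiplicativeR

section

variable {r : ℕ} {f : (Fin r → ℕ) → ℂ}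

theorem sumOverDivisorTuples_one (hf : IsMultiplicativeR f) :
    sumOverDivisorTuples f 1 = 1 := by
  rw [sumOverDivisorTuples, Nat.divisors_one, Fintype.piFinset_singleton (fun _ : Fin r => 1),
    sum_singleton]
  exact hf.map_one

theorem sumOverDivisorTuples_mul (hf : IsMultiplicativeR f) {m n : ℕ} (hm : m ≠ 0)
    (hn : n ≠ 0) (hmn : m.Coprime n) :
    sumOverDivisorTuples f (m * n) = sumOverDivisorTuples f m * sumOverDivisorTuples f n := by
  simp only [sumOverDivisorTuples, hmn.sum_piFinset_divisors_mul, sum_mul_sum]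
  refine sum_congr rfl fun a ha => sum_congr rfl fun b hb => ?_
  simp only [Fintype.mem_piFinset, Nat.mem_divisors] at ha hb
  exact hf.2 a b (fun i => Nat.pos_of_dvd_of_pos (ha i).1 (Nat.pos_of_ne_zero hm))
    (fun i => Nat.pos_of_dvd_of_pos (hb i).1 (Nat.pos_of_ne_zero hn))
    (Nat.Coprime.prod_left fun i _ =>
      Nat.Coprime.prod_right fun j _ => hmn.of_dvd (ha i).1 (hb j).1)

theorem psiLcm_zero : psiLcm f 0 = 0 := by
  refine sum_eq_zero fun d hd => ?_
  obtain ⟨i, -, -⟩ := Finset.lcm_eq_zero_iff.1 (mem_filter.1 hd).2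
  simpa using Fintype.mem_piFinset.1 (mem_filter.1 hd).1 i

theorem psiLcm_eq_sum_filter_lcm_eq {d n : ℕ} (hdn : d ∣ n) (hn : n ≠ 0) :
    psiLcm f d =
      ∑ e ∈ Fintype.piFinset (fun _ : Fin r => n.divisors) with univ.lcm e = d, f e := by
  refine sum_congr (Finset.ext fun e => ?_) fun _ _ => rfl
  simp only [mem_filter, Fintype.mem_piFinset, Nat.mem_divisors]
  constructor
  · rintro ⟨he, hlcm⟩
    exact ⟨fun i => ⟨(he i).1.trans hdn, hn⟩, hlcm⟩
  · rintro ⟨-, hlcm⟩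
    exact ⟨fun i => ⟨hlcm ▸ dvd_lcm (mem_univ i), ne_zero_of_dvd_ne_zero hn hdn⟩, hlcm⟩

theorem sum_divisors_psiLcm {n : ℕ} (hn : n ≠ 0) :
    ∑ d ∈ n.divisors, psiLcm f d = sumOverDivisorTuples f n := by
  rw [sumOverDivisorTuples,
    ← sum_fiberwise_of_maps_to (g := fun e => univ.lcm e) (t := n.divisors)]
  · exact sum_congr rfl fun d hd => psiLcm_eq_sum_filter_lcm_eq (Nat.dvd_of_mem_divisors hd) hn
  · intro e he
    simp only [Fintype.mem_piFinset, Nat.mem_divisors] at he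
    exact Nat.mem_divisors.2 ⟨Finset.lcm_dvd fun i _ => (he i).1, hn⟩

variable (f) in
noncomputable def lcmConvolute : ArithmeticFunction ℂ := ⟨psiLcm f, psiLcm_zero⟩

theorem lcmConvolute_apply (n : ℕ) : lcmConvolute f n = psiLcm f n := rfl

theorem lcmConvolute_mul_zeta_apply {n : ℕ} (hn : n ≠ 0) :
    (lcmConvolute f * ζ) n = sumOverDivisorTuples f n := by
  rw [coe_mul_zeta_apply]
  exact sum_divisors_psiLcm hn

theorem isMultiplicative_lcmConvolute_mul_zeta (hf : IsMultiplicativeR f) :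
    (lcmConvolute f * ζ).IsMultiplicative := by
  refine IsMultiplicative.iff_ne_zero.2 ⟨?_, fun hm hn hmn => ?_⟩
  · rw [lcmConvolute_mul_zeta_apply one_ne_zero, sumOverDivisorTuples_one hf]
  · rw [lcmConvolute_mul_zeta_apply (mul_ne_zero hm hn), lcmConvolute_mul_zeta_apply hm,
      lcmConvolute_mul_zeta_apply hn, sumOverDivisorTuples_mul hf hm hn hmn]

theorem lcmConvolute_eq_mul_zeta_mul_moebius :
    lcmConvolute f = lcmConvolute f * ζ * μ := by
  rw [mul_assoc, coe_zeta_mul_coe_moebius, mul_one]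

theorem isMultiplicative_lcmConvolute (hf : IsMultiplicativeR f) :
    (lcmConvolute f).IsMultiplicative := by
  rw [lcmConvolute_eq_mul_zeta_mul_moebius]
  exact (isMultiplicative_lcmConvolute_mul_zeta hf).mul isMultiplicative_moebius.intCast

end

theorem ArithmeticFunction.IsMultiplicative.isMultiplicative1 {g : ArithmeticFunction ℂ}
    (hg : g.IsMultiplicative) : IsMultiplicative1 g :=
  ⟨⟨1, one_pos, by simp [hg.map_one]⟩, fun _ _ _ _ hmn => hg.map_mul_of_coprime hmn⟩

theorem psiLcm_multiplicative_and_eq_conv_moebius {r : ℕ}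
    (f : (Fin r → ℕ) → ℂ) (hf : IsMultiplicativeR f) :
    IsMultiplicative1 (psiLcm f) ∧
      ∀ n : ℕ, 0 < n →
        psiLcm f n = ∑ d ∈ n.divisors,
          sumOverDivisorTuples f d * ((ArithmeticFunction.moebius (n / d) : ℤ) : ℂ) := by
  refine ⟨(isMultiplicative_lcmConvolute hf).isMultiplicative1, fun n _ => ?_⟩
  rw [← lcmConvolute_apply, lcmConvolute_eq_mul_zeta_mul_moebius, mul_apply,
    Nat.sum_divisorsAntidiagonal fun a b =>
      (lcmConvolute f * ζ) a * (μ : ArithmeticFunction ℂ) b]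
  refine sum_congr rfl fun d hd => ?_
  rw [lcmConvolute_mul_zeta_apply (Nat.ne_of_gt (Nat.pos_of_mem_divisors hd)), intCoe_apply]
end

section
/- For every positive integer n, the number of ordered r-tuples (d₁,...,dᵣ) of positive integers with lcm(d₁,...,dᵣ) = n equals M_r(n) = ∑_{ab=n} μ(a)τ(b)^r = ∏_{p^ν ∥ n} ((ν+1)^r − ν^r). -/
/-!
Sorting the `r`-tuples of divisors of `n` by their lcm gives `∑_{d ∣ n} M_r(d) = τ(n)^r`, so
Möbius inversion yields `M_r = μ * τ^r`. This Dirichlet product of multiplicative functions is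
multiplicative, and at a prime power only the divisors `1` and `p` contribute:
`M_r(p^ν) = τ(p^ν)^r - τ(p^(ν-1))^r = (ν+1)^r - ν^r`.
-/

open Finset ArithmeticFunction
open scoped ArithmeticFunction.Moebius ArithmeticFunction.sigma

namespace ArithmeticFunction

theorem ppow_apply_of_ne_zero {R : Type*} [Semiring R] {f : ArithmeticFunction R} {k n : ℕ}
    (hn : n ≠ 0) : f.ppow k n = f n ^ k := by
  rcases k.eq_zero_or_pos with rfl | hk
  · simp [ppow_zero, hn]
  · exact ppow_apply hk

variable {R : Type*} [CommRing R]

theorem moebius_mul_apply (f : ArithmeticFunction R) (n : ℕ) :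
    ((μ : ArithmeticFunction R) * f) n = ∑ a ∈ n.divisors, (μ a : R) * f (n / a) := by
  rw [mul_apply, Nat.sum_divisorsAntidiagonal fun a b => (μ : ArithmeticFunction R) a * f b]
  simp only [intCoe_apply]

theorem moebius_mul_apply_prime_pow_succ (f : ArithmeticFunction R) {p : ℕ} (hp : p.Prime)
    (k : ℕ) : ((μ : ArithmeticFunction R) * f) (p ^ (k + 1)) = f (p ^ (k + 1)) - f (p ^ k) := by
  have hμ : ∀ i ∈ range k,
      (μ (p ^ (i + 1 + 1)) : R) * f (p ^ (k + 1) / p ^ (i + 1 + 1)) = 0 :=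
    fun i _ => by simp [moebius_apply_prime_pow hp]
  rw [moebius_mul_apply, Nat.sum_divisors_prime_pow hp, sum_range_succ', sum_range_succ',
    sum_eq_zero hμ, Nat.pow_div (by omega) hp.pos, Nat.pow_div (by omega) hp.pos]
  simp [moebius_apply_prime hp, sub_eq_neg_add]

theorem coe_ppow_sigma_zero_apply {r m : ℕ} (hm : m ≠ 0) :
    (((σ 0).ppow r : ArithmeticFunction ℕ) : ArithmeticFunction ℤ) m =
      (#m.divisors : ℤ) ^ r := by
  rw [natCoe_apply, ppow_apply_of_ne_zero hm, sigma_zero_apply, Nat.cast_pow]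

theorem moebius_mul_ppow_sigma_zero_apply (r n : ℕ) :
    (μ * (((σ 0).ppow r : ArithmeticFunction ℕ) : ArithmeticFunction ℤ)) n =
      ∑ a ∈ n.divisors, μ a * (#(n / a).divisors : ℤ) ^ r := by
  have h := moebius_mul_apply (((σ 0).ppow r : ArithmeticFunction ℕ) : ArithmeticFunction ℤ) n
  rw [intCoe_int] at h
  refine h.trans (sum_congr rfl fun a ha => ?_)
  rw [Int.cast_id, coe_ppow_sigma_zero_apply
    (Nat.div_pos (Nat.divisor_le ha) (Nat.pos_of_mem_divisors ha)).ne']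

theorem moebius_mul_ppow_sigma_zero_apply_prime_pow {p : ℕ} (hp : p.Prime) (r k : ℕ) :
    (μ * (((σ 0).ppow r : ArithmeticFunction ℕ) : ArithmeticFunction ℤ)) (p ^ (k + 1)) =
      ((k + 1 : ℤ) + 1) ^ r - (k + 1 : ℤ) ^ r := by
  have h := moebius_mul_apply_prime_pow_succ
    (((σ 0).ppow r : ArithmeticFunction ℕ) : ArithmeticFunction ℤ) hp k
  rw [intCoe_int] at h
  simp only [h, natCoe_apply, ppow_apply_of_ne_zero (pow_ne_zero _ hp.ne_zero),
    sigma_zero_apply_prime_pow hp]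
  push_cast
  ring

end ArithmeticFunction

section LcmTuples

variable (ι : Type*) [Fintype ι] [DecidableEq ι]

def lcmTuples (n : ℕ) : Finset (ι → ℕ) :=
  (Fintype.piFinset fun _ : ι => n.divisors).filter fun d => univ.lcm d = n

variable {ι}

theorem filter_lcm_eq_lcmTuples {n d : ℕ} (hn : n ≠ 0) (hd : d ∣ n) :
    (Fintype.piFinset fun _ : ι => n.divisors).filter (fun f => univ.lcm f = d) =
      lcmTuples ι d := by
  have hd0 : d ≠ 0 := ne_zero_of_dvd_ne_zero hn hd
  ext f
  simp only [lcmTuples, mem_filter, Fintype.mem_piFinset, Nat.mem_divisors, and_congr_left_iff]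
  rintro rfl
  exact forall_congr' fun i =>
    ⟨fun _ => ⟨dvd_lcm (mem_univ i), hd0⟩, fun h => ⟨h.1.trans hd, hn⟩⟩

theorem sum_card_lcmTuples {n : ℕ} (hn : n ≠ 0) :
    ∑ d ∈ n.divisors, #(lcmTuples ι d) = #n.divisors ^ Fintype.card ι := by
  have hlcm : ∀ f ∈ Fintype.piFinset fun _ : ι => n.divisors, univ.lcm f ∈ n.divisors := by
    intro f hf
    simp only [Fintype.mem_piFinset, Nat.mem_divisors] at hf
    exact Nat.mem_divisors.mpr ⟨Finset.lcm_dvd fun i _ => (hf i).1, hn⟩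
  calc ∑ d ∈ n.divisors, #(lcmTuples ι d)
      _ = #(Fintype.piFinset fun _ : ι => n.divisors) := by
        rw [card_eq_sum_card_fiberwise hlcm]
        exact sum_congr rfl fun d hd => by
          rw [filter_lcm_eq_lcmTuples hn (Nat.dvd_of_mem_divisors hd)]
      _ = #n.divisors ^ Fintype.card ι := by rw [Fintype.card_piFinset, prod_const, card_univ]

theorem card_lcmTuples_eq_moebius_mul {n : ℕ} (hn : n ≠ 0) :
    (#(lcmTuples ι n) : ℤ) =
      (μ * (((σ 0).ppow (Fintype.card ι) : ArithmeticFunction ℕ) :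
        ArithmeticFunction ℤ)) n := by
  have hsum : ∀ m > 0, ∑ d ∈ m.divisors, (#(lcmTuples ι d) : ℤ) =
      (((σ 0).ppow (Fintype.card ι) : ArithmeticFunction ℕ) : ArithmeticFunction ℤ) m := by
    intro m hm
    rw [coe_ppow_sigma_zero_apply hm.ne']
    exact_mod_cast sum_card_lcmTuples hm.ne'
  rw [← sum_eq_iff_sum_mul_moebius_eq.mp hsum n (Nat.pos_of_ne_zero hn), mul_apply]
  simp only [Int.cast_id]

end LcmTuples

theorem card_lcm_factorizations (r n : ℕ) (hn : 0 < n) :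
    (((Fintype.piFinset fun _ : Fin r => n.divisors).filter
        (fun d => Finset.univ.lcm d = n)).card : ℤ)
      = ∑ a ∈ n.divisors,
          ArithmeticFunction.moebius a * ((n / a).divisors.card : ℤ) ^ r ∧
    (((Fintype.piFinset fun _ : Fin r => n.divisors).filter
        (fun d => Finset.univ.lcm d = n)).card : ℤ)
      = ∏ p ∈ n.primeFactors,
          (((n.factorization p : ℤ) + 1) ^ r - (n.factorization p : ℤ) ^ r) := by
  set T : ArithmeticFunction ℤ :=
    (((σ 0).ppow r : ArithmeticFunction ℕ) : ArithmeticFunction ℤ)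
  have hcount : (#(lcmTuples (Fin r) n) : ℤ) = (μ * T) n := by
    simpa only [Fintype.card_fin] using card_lcmTuples_eq_moebius_mul (ι := Fin r) hn.ne'
  refine ⟨?_, ?_⟩ <;> rw [← lcmTuples, hcount]
  · exact moebius_mul_ppow_sigma_zero_apply r n
  · have hmult : (μ * T).IsMultiplicative :=
      isMultiplicative_moebius.mul isMultiplicative_sigma.ppow.natCast
    rw [hmult.multiplicative_factorization _ hn.ne', Nat.prod_factorization_eq_prod_primeFactors]
    refine prod_congr rfl fun p hp => ?_
    obtain ⟨k, hk⟩ :=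
      Nat.exists_eq_add_one_of_ne_zero (Finsupp.mem_support_iff.mp hp : n.factorization p ≠ 0)
    rw [hk, moebius_mul_ppow_sigma_zero_apply_prime_pow (Nat.prime_of_mem_primeFactors hp)]
    push_cast
    ring
end

section
/- For every function g : ℕ → ℂ and every positive integer n: ∑_{d₁···dᵣ=n} g(gcd(d₁,...,dᵣ)) = ∑_{a^r b = n} (μ*g)(a)·τ_r(b), where * is one-variable Dirichlet convolution and τ_r is the Piltz divisor function of order r. -/
/-!
Möbius inversion writes `g m = ∑_{a ∣ m} (μ * g)(a)`. Applying it to `m = gcd(d₁, …, dᵣ)`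
and swapping the sums, the coefficient of `(μ * g)(a)` is the number of factorizations of `n`
all of whose factors are divisible by `a`. Dividing every factor by `a` identifies these with the
factorizations of `n / aʳ`, and there are none unless `aʳ ∣ n`.
-/

open Finset

/-- The Piltz divisor function `τ_r(n)`: the number of ordered `r`-tuples of
positive integers with product `n`. -/
def piltz (r n : ℕ) : ℕ :=
  ((Fintype.piFinset fun _ : Fin r => n.divisors).filter
      (fun d => ∏ i, d i = n)).card

open ArithmeticFunction
open scoped ArithmeticFunction.Moebius

def factorizations (r n : ℕ) : Finset (Fin r → ℕ) :=
  (Fintype.piFinset fun _ : Fin r => n.divisors).filter (fun d => ∏ i, d i = n)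

theorem card_factorizations (r n : ℕ) : #(factorizations r n) = piltz r n := rfl

theorem mem_factorizations {r n : ℕ} (hn : n ≠ 0) {d : Fin r → ℕ} :
    d ∈ factorizations r n ↔ ∏ i, d i = n := by
  simp only [factorizations, mem_filter, Fintype.mem_piFinset, Nat.mem_divisors,
    and_iff_right_iff_imp]
  rintro rfl i
  exact ⟨dvd_prod_of_mem _ (mem_univ i), hn⟩

theorem pow_dvd_of_mem_factorizations {r n a : ℕ} {d : Fin r → ℕ}
    (hd : d ∈ factorizations r n) (hdvd : ∀ i, a ∣ d i) : a ^ r ∣ n := by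
  rw [← (mem_filter.1 hd).2, ← Fin.prod_const]
  exact prod_dvd_prod_of_dvd _ _ fun i _ => hdvd i

theorem card_filter_forall_dvd_factorizations {r n a : ℕ} (hn : n ≠ 0) (ha : a ≠ 0) :
    #{d ∈ factorizations r n | ∀ i, a ∣ d i} =
      if a ^ r ∣ n then piltz r (n / a ^ r) else 0 := by
  split_ifs with har
  · have hq : n / a ^ r ≠ 0 := (Nat.div_ne_zero_iff_of_dvd har).2 ⟨hn, pow_ne_zero r ha⟩
    rw [← card_factorizations]
    refine card_nbij' (fun d i => d i / a) (fun e i => a * e i) ?_ ?_ ?_ ?_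
    · intro d hd
      simp only [coe_filter, Set.mem_ofPred_eq, mem_factorizations hn, mem_coe,
        mem_factorizations hq] at hd ⊢
      obtain ⟨hprod, hdvd⟩ := hd
      have hfactor : n = a ^ r * ∏ i, d i / a := by
        rw [← hprod, ← Fin.prod_const, ← prod_mul_distrib]
        exact prod_congr rfl fun i _ => (Nat.mul_div_cancel' (hdvd i)).symm
      exact (Nat.div_eq_of_eq_mul_right (pow_pos (Nat.pos_of_ne_zero ha) r) hfactor).symm
    · intro e he
      simp only [coe_filter, Set.mem_ofPred_eq, mem_factorizations hn, mem_coe,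
        mem_factorizations hq] at he ⊢
      refine ⟨?_, fun i => dvd_mul_right _ _⟩
      rw [prod_mul_distrib, he, Fin.prod_const, Nat.mul_div_cancel' har]
    · intro d hd
      funext i
      exact Nat.mul_div_cancel' ((mem_filter.1 hd).2 i)
    · intro e _
      funext i
      exact Nat.mul_div_cancel_left _ (Nat.pos_of_ne_zero ha)
  · rw [card_eq_zero, filter_eq_empty_iff]
    exact fun d hd hdvd => har (pow_dvd_of_mem_factorizations hd hdvd)

variable {R : Type*} [NonAssocRing R]

/-- The Dirichlet convolution `(μ * g)(a)`; `g` need not vanish at `0`, so it is not an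
`ArithmeticFunction`. -/
def moebiusConv (g : ℕ → R) (a : ℕ) : R := ∑ t ∈ a.divisors, (μ t : R) * g (a / t)

theorem sum_divisors_moebiusConv (g : ℕ → R) {m : ℕ} (hm : m ≠ 0) :
    ∑ a ∈ m.divisors, moebiusConv g a = g m := by
  refine sum_eq_iff_sum_mul_moebius_eq.2 (fun k _ => ?_) m (Nat.pos_of_ne_zero hm)
  rw [Nat.sum_divisorsAntidiagonal (fun x y => (μ x : R) * g y), moebiusConv]

theorem sum_comp_eq_sum_moebiusConv_mul_card {ι : Type*} (s : Finset ι) (G : ι → ℕ) {n : ℕ}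
    (hn : n ≠ 0) (hG : ∀ d ∈ s, G d ∣ n) (g : ℕ → R) :
    ∑ d ∈ s, g (G d) = ∑ a ∈ n.divisors, moebiusConv g a * #{d ∈ s | a ∣ G d} := by
  calc ∑ d ∈ s, g (G d)
      = ∑ d ∈ s, ∑ a ∈ n.divisors, if a ∣ G d then moebiusConv g a else 0 := by
        refine sum_congr rfl fun d hd => ?_
        rw [← sum_filter, Nat.divisors_filter_dvd_of_dvd hn (hG d hd),
          sum_divisors_moebiusConv g (ne_zero_of_dvd_ne_zero hn (hG d hd))]
    _ = _ := by
        rw [sum_comm]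
        refine sum_congr rfl fun a _ => ?_
        rw [← sum_filter, sum_const, nsmul_eq_mul, Nat.cast_comm]

theorem sum_g_gcd_over_factorizations (r : ℕ) (hr : 0 < r) (g : ℕ → ℂ)
    (n : ℕ) (hn : 0 < n) :
    ∑ d ∈ (Fintype.piFinset fun _ : Fin r => n.divisors).filter
        (fun d => ∏ i, d i = n), g (Finset.univ.gcd d)
      = ∑ a ∈ n.divisors.filter (fun a => a ^ r ∣ n),
          (∑ t ∈ a.divisors,
            ((ArithmeticFunction.moebius t : ℤ) : ℂ) * g (a / t)) *
            (piltz r (n / a ^ r) : ℂ) := by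
  have hgcd : ∀ d ∈ factorizations r n, univ.gcd d ∣ n := fun d hd =>
    (gcd_dvd (mem_univ ⟨0, hr⟩)).trans <|
      (mem_factorizations hn.ne').1 hd ▸ dvd_prod_of_mem d (mem_univ _)
  change ∑ d ∈ factorizations r n, g (univ.gcd d) = ∑ a ∈ _, moebiusConv g a * _
  rw [sum_comp_eq_sum_moebiusConv_mul_card _ _ hn.ne' hgcd, sum_filter]
  refine sum_congr rfl fun a ha => ?_
  simp only [Finset.dvd_gcd_iff, mem_univ, forall_const]
  rw [card_filter_forall_dvd_factorizations hn.ne' (Nat.pos_of_mem_divisors ha).ne']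
  split_ifs <;> simp
end

section
/- For every positive integer n: ∑_{lcm(d,e)=n} φ(gcd(d,e)) = ψ(n), where the sum is over ordered pairs (d,e) of positive integers with lcm(d,e) = n, φ is Euler's totient, and ψ(n) = n·∏_{p∣n}(1+1/p) is the Dedekind psi function. -/
/-!
Since `φ` is multiplicative, `φ (lcm d e) * φ (gcd d e) = φ d * φ e`, so `φ n` times the sum is
`∑_{lcm d e = n} φ d * φ e`. Summed over the divisors of `n`, the latter gives
`(∑_{d ∣ n} φ d) ^ 2 = n ^ 2`. The pointwise product `φ ψ` is multiplicative with the same divisor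
sums, as one checks on prime powers, so Möbius inversion identifies the two; divide by `φ n ≠ 0`.
-/

open Finset ArithmeticFunction
open scoped ArithmeticFunction.zeta

namespace Nat

def lcmPairs (n : ℕ) : Finset (ℕ × ℕ) :=
  {p ∈ n.divisors ×ˢ n.divisors | p.1.lcm p.2 = n}

theorem mem_lcmPairs {n : ℕ} {p : ℕ × ℕ} : p ∈ lcmPairs n ↔ p.1.lcm p.2 = n ∧ n ≠ 0 := by
  rcases p with ⟨d, e⟩
  simp only [lcmPairs, mem_filter, mem_product, mem_divisors]
  constructor
  · rintro ⟨⟨⟨-, hn⟩, -⟩, hl⟩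
    exact ⟨hl, hn⟩
  · rintro ⟨rfl, hn⟩
    exact ⟨⟨⟨dvd_lcm_left d e, hn⟩, ⟨dvd_lcm_right d e, hn⟩⟩, rfl⟩

theorem sum_divisors_sum_lcmPairs {M : Type*} [AddCommMonoid M] (f : ℕ × ℕ → M) (n : ℕ) :
    ∑ m ∈ n.divisors, ∑ p ∈ lcmPairs m, f p = ∑ p ∈ n.divisors ×ˢ n.divisors, f p := by
  rw [← sum_fiberwise_of_maps_to (g := fun p => p.1.lcm p.2) (fun p hp => ?_) f]
  · refine sum_congr rfl fun m hm => sum_congr (ext fun p => ?_) fun _ _ => rfl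
    rw [mem_divisors] at hm
    simp only [mem_filter, mem_product, mem_divisors, mem_lcmPairs]
    constructor
    · rintro ⟨rfl, -⟩
      exact ⟨⟨⟨(dvd_lcm_left _ _).trans hm.1, hm.2⟩, ⟨(dvd_lcm_right _ _).trans hm.1, hm.2⟩⟩, rfl⟩
    · rintro ⟨-, rfl⟩
      exact ⟨rfl, ne_zero_of_dvd_ne_zero hm.2 hm.1⟩
  · simp only [mem_product, mem_divisors] at hp ⊢
    exact ⟨lcm_dvd hp.1.1 hp.2.1, hp.1.2⟩

end Nat

namespace ArithmeticFunction

def totient : ArithmeticFunction ℕ := ⟨Nat.totient, Nat.totient_zero⟩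

theorem totient_apply (n : ℕ) : totient n = n.totient := rfl

theorem isMultiplicative_totient : IsMultiplicative totient :=
  ⟨Nat.totient_one, Nat.totient_mul⟩

noncomputable def dedekindPsi : ArithmeticFunction ℚ :=
  ⟨fun n => n * ∏ p ∈ n.primeFactors, (1 + 1 / (p : ℚ)), by simp⟩

theorem dedekindPsi_apply (n : ℕ) :
    dedekindPsi n = n * ∏ p ∈ n.primeFactors, (1 + 1 / (p : ℚ)) := rfl

theorem isMultiplicative_dedekindPsi : IsMultiplicative dedekindPsi := by
  refine ⟨by simp [dedekindPsi_apply], fun {m n} hmn => ?_⟩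
  simp only [dedekindPsi_apply, hmn.primeFactors_mul, prod_union hmn.disjoint_primeFactors]
  push_cast
  ring

theorem dedekindPsi_apply_prime_pow_succ {p : ℕ} (hp : p.Prime) (k : ℕ) :
    dedekindPsi (p ^ (k + 1)) = p ^ k * (p + 1) := by
  have hp0 : (p : ℚ) ≠ 0 := by exact_mod_cast hp.ne_zero
  rw [dedekindPsi_apply, Nat.primeFactors_prime_pow k.succ_ne_zero hp, prod_singleton]
  field_simp
  push_cast
  ring

theorem totient_mul_dedekindPsi_prime_pow_succ {p : ℕ} (hp : p.Prime) (k : ℕ) :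
    ((p ^ (k + 1)).totient : ℚ) * dedekindPsi (p ^ (k + 1)) = (p ^ (k + 1)) ^ 2 - (p ^ k) ^ 2 := by
  rw [dedekindPsi_apply_prime_pow_succ hp, Nat.totient_prime_pow_succ hp, Nat.cast_mul,
    Nat.cast_sub hp.one_le]
  push_cast
  ring

theorem coe_zeta_mul_totient_pmul_dedekindPsi :
    ζ * (totient : ArithmeticFunction ℚ).pmul dedekindPsi = (pow 2 : ArithmeticFunction ℚ) := by
  refine (IsMultiplicative.eq_iff_eq_on_prime_powers _ (isMultiplicative_zeta.natCast.mul
    (isMultiplicative_totient.natCast.pmul isMultiplicative_dedekindPsi)) _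
    isMultiplicative_pow.natCast).2 fun p k hp => ?_
  rw [coe_zeta_mul_apply, Nat.sum_divisors_prime_pow hp, natCoe_apply, pow_apply, if_neg (by simp)]
  induction k with
  | zero => simp [dedekindPsi_apply, totient_apply]
  | succ k ih =>
    rw [sum_range_succ, ih, pmul_apply, natCoe_apply, totient_apply,
      totient_mul_dedekindPsi_prime_pow_succ hp]
    push_cast
    ring

theorem sum_divisors_totient_mul_dedekindPsi (n : ℕ) :
    ∑ m ∈ n.divisors, (m.totient : ℚ) * dedekindPsi m = (n : ℚ) ^ 2 := by
  have h := congr_arg (· n) coe_zeta_mul_totient_pmul_dedekindPsi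
  rw [coe_zeta_mul_apply] at h
  simpa [pmul_apply, totient_apply, pow_apply] using h

theorem eq_of_sum_divisors_eq {R : Type*} [NonAssocRing R] {f g : ℕ → R}
    (h : ∀ n : ℕ, ∑ i ∈ n.divisors, f i = ∑ i ∈ n.divisors, g i) {n : ℕ} (hn : 0 < n) :
    f n = g n := by
  have hf := sum_eq_iff_sum_mul_moebius_eq.1 (fun m _ => h m) n hn
  have hg := (sum_eq_iff_sum_mul_moebius_eq (f := g)).1 (fun m _ => rfl) n hn
  exact hf.symm.trans hg

end ArithmeticFunction

namespace Nat

theorem totient_lcm_mul_totient_gcd (d e : ℕ) :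
    (d.lcm e).totient * (d.gcd e).totient = d.totient * e.totient :=
  isMultiplicative_totient.lcm_apply_mul_gcd_apply

theorem totient_mul_sum_lcmPairs_totient_gcd (n : ℕ) :
    n.totient * ∑ p ∈ n.lcmPairs, (p.1.gcd p.2).totient
      = ∑ p ∈ n.lcmPairs, p.1.totient * p.2.totient := by
  rw [mul_sum]
  refine sum_congr rfl fun p hp => ?_
  rw [← (mem_lcmPairs.1 hp).1]
  exact totient_lcm_mul_totient_gcd p.1 p.2

theorem sum_divisors_totient_mul_sum_lcmPairs_totient_gcd (n : ℕ) :
    ∑ m ∈ n.divisors, m.totient * ∑ p ∈ m.lcmPairs, (p.1.gcd p.2).totient = n ^ 2 := by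
  simp only [totient_mul_sum_lcmPairs_totient_gcd, sum_divisors_sum_lcmPairs, sum_product,
    ← sum_mul_sum, sum_totient, sq]

end Nat

theorem sum_totient_gcd_over_lcm_pairs_eq_dedekind_psi (n : ℕ) (hn : 0 < n) :
    ((∑ p ∈ (n.divisors ×ˢ n.divisors).filter
        (fun p => Nat.lcm p.1 p.2 = n), Nat.totient (Nat.gcd p.1 p.2) : ℕ) : ℚ)
      = n * ∏ p ∈ n.primeFactors, (1 + 1 / (p : ℚ)) := by
  have hφ : (n.totient : ℚ) ≠ 0 := by exact_mod_cast (Nat.totient_pos.2 hn).ne'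
  have hψ : ∑ p ∈ n.lcmPairs, ((p.1.gcd p.2).totient : ℚ) = dedekindPsi n :=
    mul_left_cancel₀ hφ <| eq_of_sum_divisors_eq
      (f := fun m => (m.totient : ℚ) * ∑ p ∈ m.lcmPairs, ((p.1.gcd p.2).totient : ℚ))
      (g := fun m => (m.totient : ℚ) * dedekindPsi m) (fun m => by
        rw [sum_divisors_totient_mul_dedekindPsi]
        exact_mod_cast Nat.sum_divisors_totient_mul_sum_lcmPairs_totient_gcd m) hn
  rw [← dedekindPsi_apply, ← hψ, Nat.cast_sum]
  rfl
end

section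
/- For every positive integer n: ∑_{de=n} c_d(e) equals √n if n is a perfect square and 0 otherwise, where c_d(e) is the Ramanujan sum and the sum is over ordered pairs (d,e) of positive integers with de = n. -/
/-!
Writing `d = t s`, `e = t u` for `t ∣ gcd(d, e)` turns the double sum into
`∑_{t² ∣ n} t ∑_{s u = n / t²} μ(s)`. The inner sum is `[n = t²]` because `μ * ζ = ε`,
so only `t = √n` survives, and only when `n` is a perfect square.
-/

open Finset

/-- The Ramanujan sum `c_d(e) = ∑_{t ∣ gcd(e,d)} t·μ(d/t)`. -/
def ramanujanSum (d e : ℕ) : ℤ :=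
  ∑ t ∈ (Nat.gcd e d).divisors, (t : ℤ) * ArithmeticFunction.moebius (d / t)

open ArithmeticFunction
open scoped ArithmeticFunction.Moebius

theorem sum_divisorsAntidiagonal_sum_divisors_gcd {M : Type*} [AddCommMonoid M]
    (f : ℕ → ℕ → ℕ → M) (n : ℕ) :
    ∑ p ∈ n.divisorsAntidiagonal, ∑ t ∈ (p.2.gcd p.1).divisors, f t (p.1 / t) (p.2 / t)
      = ∑ t ∈ n.divisors with t * t ∣ n,
          ∑ q ∈ (n / (t * t)).divisorsAntidiagonal, f t q.1 q.2 := by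
  rw [sum_sigma', sum_sigma']
  refine sum_nbij' (fun x => ⟨x.2, (x.1.1 / x.2, x.1.2 / x.2)⟩)
    (fun y => ⟨(y.1 * y.2.1, y.1 * y.2.2), y.1⟩) ?_ ?_ ?_ ?_ (fun _ _ => rfl)
  · rintro ⟨⟨d, e⟩, t⟩ hx
    simp only [mem_sigma, Nat.mem_divisorsAntidiagonal, Nat.mem_divisors, Nat.dvd_gcd_iff] at hx
    obtain ⟨⟨rfl, hn⟩, ⟨⟨u, rfl⟩, ⟨s, rfl⟩⟩, -⟩ := hx
    have ht : 0 < t := Nat.pos_of_ne_zero (by rintro rfl; simp at hn)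
    rw [show t * s * (t * u) = t * t * (s * u) by ring] at hn ⊢
    simp only [mem_sigma, mem_filter, Nat.mem_divisors, Nat.mem_divisorsAntidiagonal,
      Nat.mul_div_cancel_left _ ht, Nat.mul_div_cancel_left _ (Nat.mul_pos ht ht)]
    exact ⟨⟨⟨Dvd.intro (t * (s * u)) (by ring), hn⟩, Dvd.intro _ rfl⟩, trivial,
      right_ne_zero_of_mul hn⟩
  · rintro ⟨t, s, u⟩ hy
    simp only [mem_sigma, mem_filter, Nat.mem_divisors, Nat.mem_divisorsAntidiagonal] at hy
    obtain ⟨⟨⟨-, hn⟩, htt⟩, hsu, -⟩ := hy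
    have : t * s * (t * u) = n := by
      rw [show t * s * (t * u) = t * t * (s * u) by ring, hsu, Nat.mul_div_cancel' htt]
    simp only [mem_sigma, Nat.mem_divisorsAntidiagonal, Nat.mem_divisors]
    exact ⟨⟨this, hn⟩, Nat.dvd_gcd (dvd_mul_right t u) (dvd_mul_right t s),
      Nat.gcd_ne_zero_left (right_ne_zero_of_mul (this ▸ hn))⟩
  · rintro ⟨⟨d, e⟩, t⟩ hx
    simp only [mem_sigma, Nat.mem_divisorsAntidiagonal, Nat.mem_divisors, Nat.dvd_gcd_iff] at hx
    obtain ⟨⟨rfl, hn⟩, ⟨⟨u, rfl⟩, ⟨s, rfl⟩⟩, -⟩ := hx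
    have ht : 0 < t := Nat.pos_of_ne_zero (by rintro rfl; simp at hn)
    simp [Nat.mul_div_cancel_left _ ht]
  · rintro ⟨t, s, u⟩ hy
    simp only [mem_sigma, mem_filter, Nat.mem_divisors] at hy
    obtain ⟨⟨⟨-, hn⟩, htt⟩, -⟩ := hy
    have ht : 0 < t := Nat.pos_of_ne_zero (by rintro rfl; simp_all)
    simp [Nat.mul_div_cancel_left _ ht]

theorem sum_divisorsAntidiagonal_moebius (m : ℕ) :
    ∑ p ∈ m.divisorsAntidiagonal, (μ p.1 : ℤ) = if m = 1 then 1 else 0 := by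
  rw [Nat.sum_divisorsAntidiagonal (fun s _ => (μ s : ℤ)), ← coe_mul_zeta_apply,
    moebius_mul_coe_zeta, one_apply]

theorem sum_divisors_ite_mul_self_eq {R : Type*} [AddCommMonoidWithOne R] (n : ℕ) :
    ∑ t ∈ n.divisors, (if t * t = n then (t : R) else 0)
      = if IsSquare n then (Nat.sqrt n : R) else 0 := by
  split_ifs with hn
  · obtain ⟨r, rfl⟩ := hn
    simp_rw [Nat.mul_self_inj, Nat.sqrt_eq]
    rw [sum_ite_eq']
    split_ifs with hr
    · rfl
    · simp_all
  · exact sum_eq_zero fun t _ => if_neg fun h => hn ⟨t, h.symm⟩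

theorem sum_filter_ite_div_mul_self_eq_one {M : Type*} [AddCommMonoid M] (f : ℕ → M) (n : ℕ) :
    ∑ t ∈ n.divisors with t * t ∣ n, (if n / (t * t) = 1 then f t else 0)
      = ∑ t ∈ n.divisors, if t * t = n then f t else 0 := by
  rw [sum_filter]
  refine sum_congr rfl fun t ht => ?_
  have ht0 := Nat.pos_of_mem_divisors ht
  by_cases h : t * t ∣ n
  · simp [h, Nat.div_eq_iff_eq_mul_left (Nat.mul_pos ht0 ht0) h, eq_comm]
  · rw [if_neg h, if_neg fun e : t * t = n => h (e ▸ dvd_rfl)]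

theorem sum_ramanujan_dirichlet_convolute_general (n : ℕ) :
    ∑ p ∈ n.divisorsAntidiagonal, ramanujanSum p.1 p.2
      = if IsSquare n then (Nat.sqrt n : ℤ) else 0 := by
  calc ∑ p ∈ n.divisorsAntidiagonal, ramanujanSum p.1 p.2
      = ∑ t ∈ n.divisors with t * t ∣ n,
          ∑ q ∈ (n / (t * t)).divisorsAntidiagonal, (t : ℤ) * μ q.1 :=
        sum_divisorsAntidiagonal_sum_divisors_gcd (fun t s _ => t * μ s) n
    _ = ∑ t ∈ n.divisors with t * t ∣ n, (if n / (t * t) = 1 then (t : ℤ) else 0) := by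
        simp_rw [← mul_sum, sum_divisorsAntidiagonal_moebius, mul_ite, mul_one, mul_zero]
    _ = _ := by rw [sum_filter_ite_div_mul_self_eq_one, sum_divisors_ite_mul_self_eq]

theorem sum_ramanujan_dirichlet_convolute (n : ℕ) (hn : 0 < n) :
    ∑ p ∈ n.divisorsAntidiagonal, ramanujanSum p.1 p.2
      = if IsSquare n then (Nat.sqrt n : ℤ) else 0 :=
  sum_ramanujan_dirichlet_convolute_general n
end
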